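/- arXiv:math/0506260 — 4 statements merged into one kernel-verified Lean document; each statement's English description precedes it below -/
import Mathlib

section
/- For every simple graph G on n vertices, μ₁(G)² + μₙ(G)² + μ₁(Ḡ)² + μₙ(Ḡ)² < n², where μ₁ and μₙ denote the largest and smallest adjacency eigenvalues respectively. -/
open Matrix SimpleGraph

/-- The eigenvalues of the adjacency matrix of `G`, in descending order:
`graphEig G i` is the `(i+1)`-th largest eigenvalue. -/
noncomputable def graphEig {n : ℕ} (G : SimpleGraph (Fin n)) (i : Fin n) : ℝ :=
  letI := Classical.decRel G.Adj
  letI hH : (G.adjMatrix ℝ).IsHermitian := by rw [Matrix.IsHermitian, conjTranspose_eq_transpose_of_trivial]; exact G.isSymm_adjMatrix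
  hH.eigenvalues (Tuple.sort hH.eigenvalues i.rev)

/-! The squares of all adjacency eigenvalues of `G` sum to `tr A(G)² = ∑ deg = 2 e(G)`, so two of
them contribute at most `2 e(G)`. Adding the same bound for `Gᶜ` gives at most
`2 e(G) + 2 e(Gᶜ) = n (n - 1) < n²`. -/

namespace Matrix.IsHermitian

variable {𝕜 ι : Type*} [RCLike 𝕜] [Fintype ι] [DecidableEq ι]

theorem trace_mul_self_eq_sum_eigenvalues_sq {A : Matrix ι ι 𝕜} (hA : A.IsHermitian) :
    (A * A).trace = ∑ i, (hA.eigenvalues i : 𝕜) ^ 2 := by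
  conv_lhs => rw [hA.spectral_theorem, ← map_mul, Unitary.conjStarAlgAut_apply, trace_mul_cycle,
    Unitary.coe_star_mul_self, one_mul, diagonal_mul_diagonal, trace_diagonal]
  simp [sq]

theorem eigenvalues_sq_add_sq_le_trace_mul_self {A : Matrix ι ι ℝ} (hA : A.IsHermitian)
    {i j : ι} (hij : i ≠ j) : hA.eigenvalues i ^ 2 + hA.eigenvalues j ^ 2 ≤ (A * A).trace := by
  calc hA.eigenvalues i ^ 2 + hA.eigenvalues j ^ 2 = ∑ k ∈ {i, j}, hA.eigenvalues k ^ 2 :=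
        (Finset.sum_pair hij (f := fun k ↦ hA.eigenvalues k ^ 2)).symm
    _ ≤ ∑ k, hA.eigenvalues k ^ 2 :=
        Finset.sum_le_sum_of_subset_of_nonneg (Finset.subset_univ _) fun k _ _ ↦ sq_nonneg _
    _ = (A * A).trace := by simp [hA.trace_mul_self_eq_sum_eigenvalues_sq]

end Matrix.IsHermitian

namespace SimpleGraph

theorem trace_adjMatrix_mul_self {V : Type*} [Fintype V] (G : SimpleGraph V)
    [DecidableRel G.Adj] :
    (G.adjMatrix ℝ * G.adjMatrix ℝ).trace = ∑ v, (G.degree v : ℝ) := by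
  simp only [trace, diag, adjMatrix_mul_self_apply_self]

theorem sum_degree_add_sum_degree_compl {V : Type*} [Fintype V] [DecidableEq V]
    (G : SimpleGraph V) [DecidableRel G.Adj] :
    ∑ v, G.degree v + ∑ v, Gᶜ.degree v = Fintype.card V * (Fintype.card V - 1) := by
  have h v : G.degree v + Gᶜ.degree v = Fintype.card V - 1 := by
    have := G.degree_lt_card_verts v
    rw [degree_compl]
    omega
  simp [← Finset.sum_add_distrib, h]

theorem graphEig_sq_add_sq_le_sum_degree {n : ℕ} (G : SimpleGraph (Fin n)) [DecidableRel G.Adj]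
    {i j : Fin n} (hij : i ≠ j) :
    graphEig G i ^ 2 + graphEig G j ^ 2 ≤ ∑ v, (G.degree v : ℝ) := by
  -- `graphEig` is defined with the classical instance.
  obtain rfl : ‹DecidableRel G.Adj› = Classical.decRel G.Adj := Subsingleton.elim _ _
  let _ := Classical.decRel G.Adj
  rw [← trace_adjMatrix_mul_self]
  exact (G.isHermitian_adjMatrix ℝ).eigenvalues_sq_add_sq_le_trace_mul_self
    ((Tuple.sort _).injective.ne (Fin.rev_injective.ne hij))

end SimpleGraph

theorem stmt4 (n : ℕ) (hn : 2 ≤ n) (G : SimpleGraph (Fin n)) :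
    graphEig G ⟨0, by omega⟩ ^ 2 + graphEig G ⟨n - 1, by omega⟩ ^ 2 +
      graphEig Gᶜ ⟨0, by omega⟩ ^ 2 + graphEig Gᶜ ⟨n - 1, by omega⟩ ^ 2 < (n : ℝ) ^ 2 := by
  classical
  have hne : (⟨0, by omega⟩ : Fin n) ≠ ⟨n - 1, by omega⟩ := Fin.ne_of_val_ne (show 0 ≠ n - 1 by omega)
  have hG := G.graphEig_sq_add_sq_le_sum_degree hne
  have hGc := Gᶜ.graphEig_sq_add_sq_le_sum_degree hne
  have hsum : ∑ v, (G.degree v : ℝ) + ∑ v, (Gᶜ.degree v : ℝ) = n * (n - 1) := by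
    have := congrArg (Nat.cast (R := ℝ)) G.sum_degree_add_sum_degree_compl
    push_cast [Fintype.card_fin, Nat.cast_sub (by omega : 1 ≤ n)] at this
    exact this
  have hpos : (0 : ℝ) < n := Nat.cast_pos.mpr (by omega)
  nlinarith
end

section
/- For every graph G = G(n,m) with n vertices and m edges, μ₁(G) − 2m/n ≥ s(G)²/(2n²√(2m)), where s(G) = Σ_{u∈V(G)} |d(u) − 2m/n|. -/
open Matrix SimpleGraph

/-!
Let `d` be the degree vector, `a = 2m/n` its mean and `Q = √(Σ d u ^ 2 / n)` its quadratic mean.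
Cauchy–Schwarz gives `s² ≤ n Σ (d u - a)² = n² (Q - a) (Q + a)`. Testing the adjacency matrix `A`
on the all-ones vector `𝟙` gives `a ≤ μ₁` (Rayleigh) and `Q ≤ μ₁`, because `‖A 𝟙‖² = Σ d u ^ 2` and
every eigenvalue of the nonnegative matrix `A` satisfies `|λ| ≤ μ₁`. Finally `a ≤ Q`, and `d u ≤ n`
gives `Q ≤ √(2m)`, so `s² ≤ n² (μ₁ - a) · 2√(2m)`.
-/

open Finset

lemma Tuple.le_apply_sort_rev_zero {α : Type*} [LinearOrder α] {n : ℕ} (f : Fin n → α)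
    (hn : 0 < n) (i : Fin n) : f i ≤ f (Tuple.sort f (Fin.rev ⟨0, hn⟩)) := by
  have hi : f i = (f ∘ Tuple.sort f) ((Tuple.sort f)⁻¹ i) := by simp
  rw [hi]
  refine Tuple.monotone_sort f (Fin.le_def.2 ?_)
  simpa [Fin.val_rev] using Nat.le_sub_one_of_lt ((Tuple.sort f)⁻¹ i).isLt

lemma OrthonormalBasis.sum_dotProduct_mul_dotProduct {ι : Type*} [Fintype ι]
    (b : OrthonormalBasis ι ℝ (EuclideanSpace ℝ ι)) (x y : ι → ℝ) :
    ∑ i, (x ⬝ᵥ b i) * (b i ⬝ᵥ y) = x ⬝ᵥ y := by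
  simpa [EuclideanSpace.inner_eq_star_dotProduct, dotProduct_comm] using
    b.sum_inner_mul_inner (WithLp.toLp 2 x) (WithLp.toLp 2 y)

lemma Matrix.abs_dotProduct_mulVec_le {ι : Type*} [Fintype ι] {A : Matrix ι ι ℝ}
    (hA : ∀ i j, 0 ≤ A i j) (x y : ι → ℝ) : |x ⬝ᵥ (A *ᵥ y)| ≤ |x| ⬝ᵥ (A *ᵥ |y|) := by
  simp only [dotProduct, mulVec, mul_sum]
  refine (abs_sum_le_sum_abs _ _).trans (sum_le_sum fun j _ => ?_)
  refine (abs_sum_le_sum_abs _ _).trans_eq (sum_congr rfl fun k _ => ?_)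
  simp [abs_mul, abs_of_nonneg (hA j k)]

namespace Matrix.IsHermitian

variable {ι : Type*} [Fintype ι] [DecidableEq ι] {A : Matrix ι ι ℝ} (hA : A.IsHermitian)

lemma eigenvectorBasis_dotProduct_mulVec (i : ι) (x : ι → ℝ) :
    hA.eigenvectorBasis i ⬝ᵥ (A *ᵥ x) = hA.eigenvalues i * (hA.eigenvectorBasis i ⬝ᵥ x) := by
  have hAt : Aᵀ = A := by simpa [conjTranspose_eq_transpose_of_trivial] using hA.eq
  have hsymm : ∀ v, v ᵥ* A = A *ᵥ v := fun v => by rw [← vecMul_transpose, hAt]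
  rw [dotProduct_mulVec, hsymm, hA.mulVec_eigenvectorBasis, smul_dotProduct, smul_eq_mul]

lemma dotProduct_self_eq_sum (x : ι → ℝ) :
    x ⬝ᵥ x = ∑ i, (hA.eigenvectorBasis i ⬝ᵥ x) ^ 2 := by
  rw [← hA.eigenvectorBasis.sum_dotProduct_mul_dotProduct]
  simp [sq, dotProduct_comm x]

lemma dotProduct_mulVec_eq_sum (x : ι → ℝ) :
    x ⬝ᵥ (A *ᵥ x) = ∑ i, hA.eigenvalues i * (hA.eigenvectorBasis i ⬝ᵥ x) ^ 2 := by
  rw [← hA.eigenvectorBasis.sum_dotProduct_mul_dotProduct]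
  refine sum_congr rfl fun i _ => ?_
  rw [dotProduct_comm x, hA.eigenvectorBasis_dotProduct_mulVec]
  ring

lemma mulVec_dotProduct_mulVec_eq_sum (x : ι → ℝ) :
    (A *ᵥ x) ⬝ᵥ (A *ᵥ x) = ∑ i, hA.eigenvalues i ^ 2 * (hA.eigenvectorBasis i ⬝ᵥ x) ^ 2 := by
  simp [hA.dotProduct_self_eq_sum (A *ᵥ x), hA.eigenvectorBasis_dotProduct_mulVec, mul_pow]

lemma dotProduct_mulVec_le {μ : ℝ} (hμ : ∀ i, hA.eigenvalues i ≤ μ) (x : ι → ℝ) :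
    x ⬝ᵥ (A *ᵥ x) ≤ μ * (x ⬝ᵥ x) := by
  rw [hA.dotProduct_mulVec_eq_sum, hA.dotProduct_self_eq_sum, mul_sum]
  exact sum_le_sum fun i _ => mul_le_mul_of_nonneg_right (hμ i) (sq_nonneg _)

lemma mulVec_dotProduct_mulVec_le {μ : ℝ} (hμ : ∀ i, |hA.eigenvalues i| ≤ μ) (x : ι → ℝ) :
    (A *ᵥ x) ⬝ᵥ (A *ᵥ x) ≤ μ ^ 2 * (x ⬝ᵥ x) := by
  rw [hA.mulVec_dotProduct_mulVec_eq_sum, hA.dotProduct_self_eq_sum, mul_sum]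
  refine sum_le_sum fun i _ => mul_le_mul_of_nonneg_right ?_ (sq_nonneg _)
  exact sq_le_sq' (abs_le.1 (hμ i)).1 (abs_le.1 (hμ i)).2

-- The test vector `|v|` for an eigenvector `v` gives a Rayleigh quotient of at least `|λ|`.
lemma abs_eigenvalues_le (hnonneg : ∀ i j, 0 ≤ A i j) {μ : ℝ}
    (hμ : ∀ i, hA.eigenvalues i ≤ μ) (i : ι) : |hA.eigenvalues i| ≤ μ := by
  set v : ι → ℝ := (hA.eigenvectorBasis i).ofLp
  have hv : v ⬝ᵥ v = 1 := by
    have h := hA.eigenvectorBasis.inner_eq_one i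
    rwa [EuclideanSpace.inner_eq_star_dotProduct, star_trivial] at h
  have habs : |v| ⬝ᵥ |v| = v ⬝ᵥ v := by simp [dotProduct, abs_mul_abs_self]
  calc |hA.eigenvalues i| = |v ⬝ᵥ (A *ᵥ v)| := by
        rw [hA.eigenvectorBasis_dotProduct_mulVec, hv, mul_one]
    _ ≤ |v| ⬝ᵥ (A *ᵥ |v|) := abs_dotProduct_mulVec_le hnonneg v v
    _ ≤ μ * (|v| ⬝ᵥ |v|) := hA.dotProduct_mulVec_le hμ |v|
    _ = μ := by rw [habs, hv, mul_one]

end Matrix.IsHermitian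

lemma Finset.sq_sum_abs_sub_mean_le {ι : Type*} (s : Finset ι) (f : ι → ℝ) :
    (∑ i ∈ s, |f i - (∑ j ∈ s, f j) / #s|) ^ 2 ≤ #s * ∑ i ∈ s, f i ^ 2 - (∑ i ∈ s, f i) ^ 2 := by
  rcases s.eq_empty_or_nonempty with rfl | hs
  · simp
  set a := (∑ j ∈ s, f j) / #s
  have hsa : (#s : ℝ) * a = ∑ j ∈ s, f j := mul_div_cancel₀ _ (by positivity)
  calc (∑ i ∈ s, |f i - a|) ^ 2 ≤ #s * ∑ i ∈ s, |f i - a| ^ 2 := sq_sum_le_card_mul_sum_sq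
    _ = #s * ∑ i ∈ s, f i ^ 2 - 2 * (#s * a) * ∑ i ∈ s, f i + (#s * a) ^ 2 := by
      simp only [sq_abs, sub_sq, sum_add_distrib, sum_sub_distrib, ← sum_mul, ← mul_sum,
        sum_const, nsmul_eq_mul]
      ring
    _ = #s * ∑ i ∈ s, f i ^ 2 - (∑ i ∈ s, f i) ^ 2 := by rw [hsa]; ring

-- `N`, `D`, `q` stand for `n`, `2m = Σ d u` and `Σ d u ^ 2`; `Q` is the quadratic mean of the degrees.
lemma sq_div_le_sub_div_of_moment_bounds {N D q S μ : ℝ} (hN : 0 < N) (hD : 0 < D)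
    (hS : S ^ 2 ≤ N * q - D ^ 2) (hDμ : D ≤ μ * N) (hqμ : q ≤ μ ^ 2 * N) (hqD : q ≤ D * N) :
    S ^ 2 / (2 * N ^ 2 * √D) ≤ μ - D / N := by
  set a := D / N
  set Q := √(q / N)
  have hμ : 0 ≤ μ := by nlinarith
  have ha : 0 ≤ a := by positivity
  have hQ2 : Q ^ 2 = q / N := Real.sq_sqrt (by rw [le_div_iff₀ hN]; nlinarith [sq_nonneg S])
  have haQ : a ≤ Q := Real.le_sqrt_of_sq_le <| by
    rw [div_pow, le_div_iff₀ hN, div_mul_eq_mul_div, div_le_iff₀ (by positivity)]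
    nlinarith [sq_nonneg S]
  have hQμ : Q ≤ μ := (Real.sqrt_le_left hμ).2 <| by rwa [div_le_iff₀ hN]
  have hQD : Q ≤ √D := Real.sqrt_le_sqrt <| by rwa [div_le_iff₀ hN]
  have hS' : S ^ 2 / N ^ 2 ≤ (Q - a) * (Q + a) := by
    rw [div_le_iff₀ (by positivity)]
    have : (Q - a) * (Q + a) * N ^ 2 = N * q - D ^ 2 := by
      rw [show (Q - a) * (Q + a) = Q ^ 2 - a ^ 2 by ring, hQ2, div_pow]
      field_simp
    linarith
  have hkey : (Q - a) * (Q + a) ≤ (μ - a) * (2 * √D) :=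
    mul_le_mul (by linarith) (by linarith) (by linarith) (by linarith)
  calc S ^ 2 / (2 * N ^ 2 * √D) = S ^ 2 / N ^ 2 / (2 * √D) := by ring
    _ ≤ μ - a := by rw [div_le_iff₀ (by positivity)]; linarith

namespace SimpleGraph

section

variable {V : Type*} [Fintype V] (G : SimpleGraph V) [DecidableRel G.Adj]

lemma adjMatrix_mulVec_one : G.adjMatrix ℝ *ᵥ 1 = fun v => (G.degree v : ℝ) := by
  ext v
  simp

lemma sum_degree_eq_two_mul_card_edgeFinset :
    ∑ v, (G.degree v : ℝ) = 2 * #G.edgeFinset := by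
  exact_mod_cast G.sum_degrees_eq_twice_card_edges

lemma sum_degree_sq_le_two_mul_card_edgeFinset_mul_card :
    ∑ v, (G.degree v : ℝ) ^ 2 ≤ 2 * #G.edgeFinset * Fintype.card V := by
  rw [← sum_degree_eq_two_mul_card_edgeFinset, sum_mul]
  refine sum_le_sum fun v _ => ?_
  rw [sq]
  gcongr
  exact_mod_cast (G.degree_lt_card_verts v).le

variable [DecidableEq V]

lemma two_mul_card_edgeFinset_le {μ : ℝ}
    (hμ : ∀ i, (G.isHermitian_adjMatrix ℝ).eigenvalues i ≤ μ) :
    2 * (#G.edgeFinset : ℝ) ≤ μ * Fintype.card V := by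
  simpa [adjMatrix_mulVec_one, dotProduct, sum_degree_eq_two_mul_card_edgeFinset] using
    (G.isHermitian_adjMatrix ℝ).dotProduct_mulVec_le hμ 1

lemma sum_degree_sq_le_sq_mul_card {μ : ℝ}
    (hμ : ∀ i, (G.isHermitian_adjMatrix ℝ).eigenvalues i ≤ μ) :
    ∑ v, (G.degree v : ℝ) ^ 2 ≤ μ ^ 2 * Fintype.card V := by
  have hnonneg : ∀ i j, 0 ≤ G.adjMatrix ℝ i j := fun i j => by
    rw [adjMatrix_apply]; positivity
  have hμ' := (G.isHermitian_adjMatrix ℝ).abs_eigenvalues_le hnonneg hμ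
  simpa [adjMatrix_mulVec_one, dotProduct, sq] using
    (G.isHermitian_adjMatrix ℝ).mulVec_dotProduct_mulVec_le hμ' 1

end

lemma eigenvalues_le_graphEig {n : ℕ} (G : SimpleGraph (Fin n)) [DecidableRel G.Adj]
    (hn : 0 < n) (i : Fin n) :
    (G.isHermitian_adjMatrix ℝ).eigenvalues i ≤ graphEig G ⟨0, hn⟩ := by
  obtain rfl : ‹DecidableRel G.Adj› = Classical.decRel G.Adj := Subsingleton.elim _ _
  exact Tuple.le_apply_sort_rev_zero _ hn i

end SimpleGraph

theorem stmt6 (n : ℕ) (hn : 0 < n) (G : SimpleGraph (Fin n))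
    (hm : 0 < G.edgeSet.ncard) :
    (∑ u : Fin n, |((G.neighborSet u).ncard : ℝ) - 2 * (G.edgeSet.ncard : ℝ) / n|) ^ 2 /
        (2 * (n : ℝ) ^ 2 * Real.sqrt (2 * (G.edgeSet.ncard : ℝ))) ≤
      graphEig G ⟨0, hn⟩ - 2 * (G.edgeSet.ncard : ℝ) / n := by
  classical
  have hdeg (u : Fin n) : (G.neighborSet u).ncard = G.degree u := by
    rw [Set.ncard_eq_toFinset_card']; rfl
  have hedges : G.edgeSet.ncard = #G.edgeFinset := by
    rw [← coe_edgeFinset, Set.ncard_coe_finset]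
  simp only [hdeg, hedges] at hm ⊢
  have hμ := G.eigenvalues_le_graphEig hn
  have hS := sq_sum_abs_sub_mean_le univ fun u => (G.degree u : ℝ)
  have hmean := G.two_mul_card_edgeFinset_le hμ
  have hsq := G.sum_degree_sq_le_sq_mul_card hμ
  have hsq' := G.sum_degree_sq_le_two_mul_card_edgeFinset_mul_card
  simp only [card_univ, Fintype.card_fin, sum_degree_eq_two_mul_card_edgeFinset]
    at hS hmean hsq hsq'
  exact sq_div_le_sub_div_of_moment_bounds (by positivity) (by positivity) hS hmean hsq hsq'
end

section
/- For every graph G of order n, μₙ(G)² + μₙ(Ḡ)² ≤ (3/8)·n², where μₙ denotes the smallest adjacency eigenvalue. -/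
/-!
Let `x` be a unit eigenvector of `A(G)` for `μ = μₙ(G) ≤ 0`, and let `C` be the subgraph of the
edges of `G` whose endpoints have strictly opposite signs under `x`. Dropping the other edges only
lowers the quadratic form, so `μ = xᵀA(G)x ≥ xᵀA(C)x`, and `xᵀA(C)x ≤ 0`; Cauchy–Schwarz over the
edges of `C` then gives `μ² ≤ e(C)`. Doing the same for `Ḡ` with an eigenvector `y` gives a cut
`C'` with `μₙ(Ḡ)² ≤ e(C')`. The graphs `C` and `C'` are edge-disjoint and `C ⊔ C'` is properly
coloured by the pair of signs `(sign x, sign y)`, so it is `K₅`-free and Turán's theorem bounds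
`e(C) + e(C')` by `(3/8) n²`.
-/

open Matrix SimpleGraph

open Finset

namespace SimpleGraph

variable {V : Type*}

theorem CliqueFree.mul_card_edgeFinset_le [Fintype V] {G : SimpleGraph V} [DecidableRel G.Adj]
    {r : ℕ} (hG : G.CliqueFree (r + 1)) :
    2 * r * #G.edgeFinset ≤ (r - 1) * Fintype.card V ^ 2 := by
  rcases r.eq_zero_or_pos with rfl | hr
  · simp
  obtain ⟨H, _, hH⟩ := exists_isTuranMaximal (V := V) hr
  obtain ⟨e⟩ := (isTuranMaximal_iff_nonempty_iso_turanGraph hr).mp hH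
  calc 2 * r * #G.edgeFinset ≤ 2 * r * #H.edgeFinset := Nat.mul_le_mul_left _ (hH.2 hG)
    _ = 2 * r * #(turanGraph (Fintype.card V) r).edgeFinset := by rw [e.card_edgeFinset_eq]
    _ ≤ (r - 1) * Fintype.card V ^ 2 := mul_card_edgeFinset_turanGraph_le

def signCut (G : SimpleGraph V) (x : V → ℝ) : SimpleGraph V where
  Adj i j := G.Adj i j ∧ x i * x j < 0
  symm := ⟨fun i j h => ⟨h.1.symm, mul_comm (x i) (x j) ▸ h.2⟩⟩
  loopless := ⟨fun i h => G.loopless.irrefl i h.1⟩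

theorem signCut_le (G : SimpleGraph V) (x : V → ℝ) : G.signCut x ≤ G := fun _ _ h => h.1

theorem colorable_signCut_sup_signCut (G H : SimpleGraph V) (x y : V → ℝ) :
    (G.signCut x ⊔ H.signCut y).Colorable 4 :=
  Coloring.colorable (α := Bool × Bool) <|
    Coloring.mk (fun i => (decide (0 ≤ x i), decide (0 ≤ y i))) fun {i j} h => by
      rcases h with ⟨-, h⟩ | ⟨-, h⟩ <;> rcases mul_neg_iff.mp h with h | h <;>
        simp [Prod.ext_iff, h.1.le, h.2.le, h.1, h.2, not_le.mpr]

variable [Fintype V] {x : V → ℝ}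

theorem sum_sum_ite_adj_one (H : SimpleGraph V) [DecidableRel H.Adj] :
    ∑ i, ∑ j, (if H.Adj i j then (1 : ℝ) else 0) = 2 * #H.edgeFinset := by
  simp only [sum_boole, ← neighborFinset_eq_filter, card_neighborFinset_eq_degree]
  exact_mod_cast H.sum_degrees_eq_twice_card_edges

theorem sum_sum_ite_adj_sq_mul_sq_le (H : SimpleGraph V) [DecidableRel H.Adj]
    (hx : ∀ i j, H.Adj i j → x i * x j ≤ 0) :
    ∑ i, ∑ j, (if H.Adj i j then (x i * x j) ^ 2 else 0) ≤ (x ⬝ᵥ x) ^ 2 / 2 := by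
  -- with `y i = x i * |x i|`, `(x i * x j) ^ 2 - y i * y j` is `0` or `2 (x i * x j) ^ 2`
  -- according as `x i * x j` is nonnegative or not
  set y : V → ℝ := fun i => x i * |x i|
  have hpair : ∀ i j,
      (if H.Adj i j then (x i * x j) ^ 2 else 0) ≤ ((x i * x j) ^ 2 - y i * y j) / 2 := by
    intro i j
    have hy : y i * y j = x i * x j * |x i * x j| := by simp only [y, abs_mul]; ring
    split_ifs with h
    · rw [hy, abs_of_nonpos (hx i j h)]; exact le_of_eq (by ring)
    · rw [hy]; nlinarith [le_abs_self (x i * x j), abs_nonneg (x i * x j), sq_abs (x i * x j)]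
  calc ∑ i, ∑ j, (if H.Adj i j then (x i * x j) ^ 2 else 0)
      ≤ ∑ i, ∑ j, ((x i * x j) ^ 2 - y i * y j) / 2 := by gcongr with i _ j _; exact hpair i j
    _ = ((x ⬝ᵥ x) ^ 2 - (∑ i, y i) ^ 2) / 2 := by
      simp only [dotProduct, sq, sum_mul_sum, ← sum_sub_distrib, sum_div]
      congr! 2 with i _ j _
      ring
    _ ≤ (x ⬝ᵥ x) ^ 2 / 2 := by gcongr; nlinarith [sq_nonneg (∑ i, y i)]

theorem sq_dotProduct_mulVec_adjMatrix_le (H : SimpleGraph V) [DecidableRel H.Adj]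
    (hx : ∀ i j, H.Adj i j → x i * x j ≤ 0) :
    (x ⬝ᵥ H.adjMatrix ℝ *ᵥ x) ^ 2 ≤ #H.edgeFinset * (x ⬝ᵥ x) ^ 2 := by
  rw [dotProduct_mulVec_adjMatrix]
  calc (∑ i, ∑ j, if H.Adj i j then x i * x j else 0) ^ 2
      ≤ (∑ i, ∑ j, if H.Adj i j then (1 : ℝ) else 0) *
          (∑ i, ∑ j, if H.Adj i j then (x i * x j) ^ 2 else 0) := by
        simpa [← univ_product_univ, sum_product, ← ite_and, -sum_boole] using
          sum_mul_sq_le_sq_mul_sq univ (fun p : V × V => if H.Adj p.1 p.2 then (1 : ℝ) else 0)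
            (fun p => if H.Adj p.1 p.2 then x p.1 * x p.2 else 0)
    _ ≤ 2 * #H.edgeFinset * ((x ⬝ᵥ x) ^ 2 / 2) := by
      rw [sum_sum_ite_adj_one]; gcongr; exact sum_sum_ite_adj_sq_mul_sq_le H hx
    _ = #H.edgeFinset * (x ⬝ᵥ x) ^ 2 := by ring

theorem dotProduct_mulVec_adjMatrix_nonpos (H : SimpleGraph V) [DecidableRel H.Adj]
    (hx : ∀ i j, H.Adj i j → x i * x j ≤ 0) : x ⬝ᵥ H.adjMatrix ℝ *ᵥ x ≤ 0 := by
  rw [dotProduct_mulVec_adjMatrix]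
  refine sum_nonpos fun i _ => sum_nonpos fun j _ => ?_
  split_ifs with h
  exacts [hx i j h, le_rfl]

theorem dotProduct_mulVec_adjMatrix_signCut_le (G : SimpleGraph V) [DecidableRel G.Adj]
    [DecidableRel (G.signCut x).Adj] :
    x ⬝ᵥ (G.signCut x).adjMatrix ℝ *ᵥ x ≤ x ⬝ᵥ G.adjMatrix ℝ *ᵥ x := by
  simp only [dotProduct_mulVec_adjMatrix]
  gcongr with i _ j _
  by_cases hij : G.Adj i j
  · by_cases hneg : x i * x j < 0 <;> simp [signCut, hij, hneg, not_lt.mp]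
  · simp [signCut, hij]

theorem sq_dotProduct_mulVec_adjMatrix_le_card_edgeFinset_signCut (G : SimpleGraph V)
    [DecidableRel G.Adj] [DecidableRel (G.signCut x).Adj] (hG : x ⬝ᵥ G.adjMatrix ℝ *ᵥ x ≤ 0) :
    (x ⬝ᵥ G.adjMatrix ℝ *ᵥ x) ^ 2 ≤ #(G.signCut x).edgeFinset * (x ⬝ᵥ x) ^ 2 := by
  have hcut_opposite : ∀ i j, (G.signCut x).Adj i j → x i * x j ≤ 0 := fun _ _ h => h.2.le
  have hle := G.dotProduct_mulVec_adjMatrix_signCut_le (x := x)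
  have hcut_nonpos := dotProduct_mulVec_adjMatrix_nonpos _ hcut_opposite
  calc (x ⬝ᵥ G.adjMatrix ℝ *ᵥ x) ^ 2 ≤ (x ⬝ᵥ (G.signCut x).adjMatrix ℝ *ᵥ x) ^ 2 := by nlinarith
    _ ≤ _ := sq_dotProduct_mulVec_adjMatrix_le _ hcut_opposite

end SimpleGraph

theorem Tuple.apply_sort_zero_le {α : Type*} [LinearOrder α] {n : ℕ} (f : Fin n → α)
    (hn : 0 < n) (k : Fin n) : f (Tuple.sort f ⟨0, hn⟩) ≤ f k := by
  simpa using Tuple.monotone_sort f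
    (show (⟨0, hn⟩ : Fin n) ≤ (Tuple.sort f).symm k from Nat.zero_le _)

namespace Matrix.IsHermitian

variable {ι : Type*} [Fintype ι] [DecidableEq ι] {A : Matrix ι ι ℝ} (hA : A.IsHermitian)

theorem eigenvalues_nonpos_of_forall_le (htr : A.trace = 0) {j : ι}
    (hj : ∀ k, hA.eigenvalues j ≤ hA.eigenvalues k) : hA.eigenvalues j ≤ 0 := by
  have hsum : ∑ k, hA.eigenvalues k = 0 := by
    simpa [htr] using hA.trace_eq_sum_eigenvalues.symm
  obtain ⟨k, -, hk⟩ := exists_le_of_sum_le (f := hA.eigenvalues) (g := 0)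
    ⟨j, mem_univ j⟩ (by simp [hsum])
  exact (hj k).trans hk

theorem dotProduct_self_eigenvectorBasis (j : ι) :
    ⇑(hA.eigenvectorBasis j) ⬝ᵥ ⇑(hA.eigenvectorBasis j) = 1 := by
  have h := hA.eigenvectorBasis.orthonormal.1 j
  rw [EuclideanSpace.norm_eq, Real.sqrt_eq_one] at h
  simpa [dotProduct, sq] using h

theorem eigenvalues_eq_dotProduct_mulVec (j : ι) :
    hA.eigenvalues j = ⇑(hA.eigenvectorBasis j) ⬝ᵥ A *ᵥ ⇑(hA.eigenvectorBasis j) := by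
  simpa using hA.eigenvalues_eq j

end Matrix.IsHermitian

theorem exists_graphEig_last_eq_dotProduct_mulVec {n : ℕ} (G : SimpleGraph (Fin n))
    [DecidableRel G.Adj] {i : Fin n} (hi : (i : ℕ) = n - 1) :
    ∃ x : Fin n → ℝ, x ⬝ᵥ x = 1 ∧ graphEig G i = x ⬝ᵥ G.adjMatrix ℝ *ᵥ x ∧ graphEig G i ≤ 0 := by
  have hn : 0 < n := i.pos
  have hH := G.isHermitian_adjMatrix ℝ
  set j := Tuple.sort hH.eigenvalues ⟨0, hn⟩
  have hrev : i.rev = ⟨0, hn⟩ := by ext; simp [hi]; omega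
  have heig : graphEig G i = hH.eigenvalues j := by
    rw [graphEig, hrev]; congr!
  exact ⟨_, hH.dotProduct_self_eigenvectorBasis j,
    heig.trans (hH.eigenvalues_eq_dotProduct_mulVec j),
    heig ▸ hH.eigenvalues_nonpos_of_forall_le (trace_adjMatrix _ _) (Tuple.apply_sort_zero_le _ hn)⟩

theorem stmt11 (n : ℕ) (hn : 0 < n) (G : SimpleGraph (Fin n)) :
    graphEig G ⟨n - 1, by omega⟩ ^ 2 + graphEig Gᶜ ⟨n - 1, by omega⟩ ^ 2 ≤
      3 / 8 * (n : ℝ) ^ 2 := by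
  classical
  obtain ⟨x, hx, hμ, hμ_nonpos⟩ :=
    exists_graphEig_last_eq_dotProduct_mulVec G (i := ⟨n - 1, by omega⟩) rfl
  obtain ⟨y, hy, hν, hν_nonpos⟩ :=
    exists_graphEig_last_eq_dotProduct_mulVec Gᶜ (i := ⟨n - 1, by omega⟩) rfl
  have hG := G.sq_dotProduct_mulVec_adjMatrix_le_card_edgeFinset_signCut (hμ ▸ hμ_nonpos)
  have hGc := Gᶜ.sq_dotProduct_mulVec_adjMatrix_le_card_edgeFinset_signCut (hν ▸ hν_nonpos)
  have hdisj : Disjoint (G.signCut x) (Gᶜ.signCut y) :=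
    disjoint_compl_right.mono (G.signCut_le x) (Gᶜ.signCut_le y)
  have hturan := ((colorable_signCut_sup_signCut G Gᶜ x y).cliqueFree
    (by norm_num : 4 < 5)).mul_card_edgeFinset_le
  simp only [edgeFinset_sup, card_union_of_disjoint (disjoint_edgeFinset.mpr hdisj),
    Fintype.card_fin] at hturan
  have hturan_real : (8 : ℝ) * (#(G.signCut x).edgeFinset + #(Gᶜ.signCut y).edgeFinset) ≤
      3 * n ^ 2 := by
    exact_mod_cast hturan
  rw [hμ, hν]
  rw [hx, one_pow, mul_one] at hG
  rw [hy, one_pow, mul_one] at hGc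
  linarith
end

section
/- For every n ≥ 4 there exists a graph G of order n with μ₁(G) + μ₁(Ḡ) > (4/3)·n − 2, where μ₁ denotes the largest adjacency eigenvalue. -/
open Matrix SimpleGraph

/-!
Let `G` be the complete split graph whose clique `S` has `r = ⌊n/3⌋` vertices; its complement is a
clique on the other `n - r` vertices plus `r` isolated ones. The top adjacency eigenvalue bounds
every Rayleigh quotient. The indicator of `Sᶜ` gives `μ₁(Ḡ) ≥ n - r - 1`, and the vector equal to
`2` on `S` and `1` off `S` gives `μ₁(G) ≥ 4r(n - 1)/(n + 3r)`, which exceeds `(n + 3r - 3)/3`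
since `0 ≤ n - 3r < 3`. The two bounds add up to more than `4n/3 - 2`.
-/

open Finset
open scoped MatrixOrder

theorem Tuple.apply_le_apply_sort_of_isTop {α : Type*} [LinearOrder α] {n : ℕ}
    (f : Fin n → α) {j : Fin n} (hj : IsTop j) (i : Fin n) : f i ≤ f (Tuple.sort f j) := by
  simpa using Tuple.monotone_sort f (hj ((Tuple.sort f).symm i))

theorem Matrix.IsHermitian.dotProduct_mulVec_le_s17 {ι : Type*} [Fintype ι] [DecidableEq ι]
    {A : Matrix ι ι ℝ} (hA : A.IsHermitian) {M : ℝ} (hM : ∀ i, hA.eigenvalues i ≤ M)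
    (x : ι → ℝ) : x ⬝ᵥ (A *ᵥ x) ≤ M * (x ⬝ᵥ x) := by
  have hle : A ≤ algebraMap ℝ _ M := by
    rw [le_algebraMap_iff_spectrum_le hA, hA.spectrum_real_eq_range_eigenvalues]
    rintro _ ⟨i, rfl⟩
    exact hM i
  simpa [sub_mulVec, Algebra.algebraMap_eq_smul_one, smul_mulVec] using
    (Matrix.le_iff.1 hle).dotProduct_mulVec_nonneg x

theorem dotProduct_adjMatrix_mulVec_le_graphEig {n : ℕ} (G : SimpleGraph (Fin n))
    [hG : DecidableRel G.Adj] (hn : 0 < n) (x : Fin n → ℝ) :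
    x ⬝ᵥ (G.adjMatrix ℝ *ᵥ x) ≤ graphEig G ⟨0, hn⟩ * (x ⬝ᵥ x) := by
  rw [Subsingleton.elim hG (Classical.decRel G.Adj)]
  let _ := Classical.decRel G.Adj
  exact (isHermitian_adjMatrix ℝ G).dotProduct_mulVec_le_s17
    (Tuple.apply_le_apply_sort_of_isTop _ fun _ => Fin.le_rev_iff.mpr (Nat.zero_le _)) x

section CompleteSplitGraph

variable {V : Type*}

def completeSplitGraph (S : Finset V) : SimpleGraph V :=
  fromRel fun u _ => u ∈ S

instance [DecidableEq V] (S : Finset V) : DecidableRel (completeSplitGraph S).Adj :=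
  inferInstanceAs (DecidableRel (fromRel _).Adj)

theorem completeSplitGraph_adj {S : Finset V} {u v : V} :
    (completeSplitGraph S).Adj u v ↔ u ≠ v ∧ (u ∈ S ∨ v ∈ S) :=
  fromRel_adj _ u v

theorem compl_completeSplitGraph_adj {S : Finset V} {u v : V} :
    (completeSplitGraph S)ᶜ.Adj u v ↔ u ≠ v ∧ u ∉ S ∧ v ∉ S := by
  rw [compl_adj, completeSplitGraph_adj]
  tauto

variable [Fintype V] [DecidableEq V] (S : Finset V)

theorem neighborFinset_completeSplitGraph_of_mem {u : V} (hu : u ∈ S) :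
    (completeSplitGraph S).neighborFinset u = univ.erase u := by
  ext v
  simp only [mem_neighborFinset, completeSplitGraph_adj, hu, true_or, and_true, mem_erase,
    mem_univ, ne_comm]

theorem neighborFinset_completeSplitGraph_of_notMem {u : V} (hu : u ∉ S) :
    (completeSplitGraph S).neighborFinset u = S := by
  ext v
  simp only [mem_neighborFinset, completeSplitGraph_adj, hu, false_or, and_iff_right_iff_imp]
  exact fun hv h => hu (h ▸ hv)

theorem neighborFinset_compl_completeSplitGraph_of_mem {u : V} (hu : u ∈ S) :
    (completeSplitGraph S)ᶜ.neighborFinset u = ∅ := by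
  ext v
  simp only [mem_neighborFinset, compl_completeSplitGraph_adj, hu, not_true_eq_false,
    false_and, and_false, notMem_empty]

theorem neighborFinset_compl_completeSplitGraph_of_notMem {u : V} (hu : u ∉ S) :
    (completeSplitGraph S)ᶜ.neighborFinset u = Sᶜ.erase u := by
  ext v
  simp only [mem_neighborFinset, compl_completeSplitGraph_adj, hu, not_false_eq_true, true_and,
    mem_erase, mem_compl, ne_comm]

theorem sum_ite_mem_univ (a b : ℝ) :
    ∑ v, (if v ∈ S then a else b) = #S * a + (Fintype.card V - #S) * b := by
  rw [← sum_add_sum_compl S, sum_ite_of_true fun _ h => h,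
    sum_ite_of_false fun _ h => mem_compl.1 h, sum_const, sum_const, card_compl,
    nsmul_eq_mul, nsmul_eq_mul, Nat.cast_sub (card_le_univ S)]

theorem adjMatrix_completeSplitGraph_mulVec :
    (completeSplitGraph S).adjMatrix ℝ *ᵥ (fun v => if v ∈ S then 2 else 1) =
      fun u => if u ∈ S then (Fintype.card V + #S - 2 : ℝ) else 2 * #S := by
  funext u
  rw [adjMatrix_mulVec_apply]
  by_cases hu : u ∈ S
  · rw [neighborFinset_completeSplitGraph_of_mem S hu, sum_erase_eq_sub (mem_univ u),
      sum_ite_mem_univ, if_pos hu, if_pos hu]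
    ring
  · rw [neighborFinset_completeSplitGraph_of_notMem S hu, sum_ite_of_true fun _ h => h,
      sum_const, nsmul_eq_mul, if_neg hu, mul_comm]

theorem adjMatrix_compl_completeSplitGraph_mulVec :
    (completeSplitGraph S)ᶜ.adjMatrix ℝ *ᵥ (fun v => if v ∈ S then 0 else 1) =
      fun u => if u ∈ S then 0 else (Fintype.card V - #S - 1 : ℝ) := by
  funext u
  rw [adjMatrix_mulVec_apply]
  by_cases hu : u ∈ S
  · rw [neighborFinset_compl_completeSplitGraph_of_mem S hu, sum_empty, if_pos hu]
  · have hcard : (#(Sᶜ.erase u) : ℝ) + 1 = Fintype.card V - #S := by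
      rw [← Nat.cast_sub (card_le_univ S), ← card_compl]
      exact_mod_cast card_erase_add_one (mem_compl.2 hu)
    rw [neighborFinset_compl_completeSplitGraph_of_notMem S hu,
      sum_ite_of_false fun _ h => mem_compl.1 (mem_of_mem_erase h), sum_const, nsmul_one,
      if_neg hu]
    linarith

theorem dotProduct_adjMatrix_completeSplitGraph_mulVec :
    (fun v => if v ∈ S then (2 : ℝ) else 1) ⬝ᵥ
      ((completeSplitGraph S).adjMatrix ℝ *ᵥ (fun v => if v ∈ S then 2 else 1)) =
      4 * #S * (Fintype.card V - 1 : ℝ) := by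
  rw [adjMatrix_completeSplitGraph_mulVec, dotProduct]
  simp only [ite_mul_ite, sum_ite_mem_univ]
  ring

theorem dotProduct_self_ite_mem_two_one :
    (fun v => if v ∈ S then (2 : ℝ) else 1) ⬝ᵥ (fun v => if v ∈ S then 2 else 1) =
      (Fintype.card V + 3 * #S : ℝ) := by
  simp only [dotProduct, ite_mul_ite, sum_ite_mem_univ]
  ring

theorem dotProduct_adjMatrix_compl_completeSplitGraph_mulVec :
    (fun v => if v ∈ S then (0 : ℝ) else 1) ⬝ᵥ
      ((completeSplitGraph S)ᶜ.adjMatrix ℝ *ᵥ (fun v => if v ∈ S then 0 else 1)) =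
      (Fintype.card V - #S) * (Fintype.card V - #S - 1 : ℝ) := by
  rw [adjMatrix_compl_completeSplitGraph_mulVec, dotProduct]
  simp only [ite_mul_ite, sum_ite_mem_univ]
  ring

theorem dotProduct_self_ite_mem_zero_one :
    (fun v => if v ∈ S then (0 : ℝ) else 1) ⬝ᵥ (fun v => if v ∈ S then 0 else 1) =
      (Fintype.card V - #S : ℝ) := by
  simp only [dotProduct, ite_mul_ite, sum_ite_mem_univ]
  ring

end CompleteSplitGraph

theorem graphEig_completeSplitGraph_mul_ge {n : ℕ} (hn : 0 < n) (S : Finset (Fin n)) :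
    4 * #S * (n - 1 : ℝ) ≤ graphEig (completeSplitGraph S) ⟨0, hn⟩ * (n + 3 * #S) := by
  have h := dotProduct_adjMatrix_mulVec_le_graphEig (completeSplitGraph S) hn
    (fun v => if v ∈ S then 2 else 1)
  rwa [dotProduct_adjMatrix_completeSplitGraph_mulVec, dotProduct_self_ite_mem_two_one,
    Fintype.card_fin] at h

theorem graphEig_compl_completeSplitGraph_ge {n : ℕ} (hn : 0 < n) (S : Finset (Fin n))
    (hS : #S < n) : (n - #S - 1 : ℝ) ≤ graphEig (completeSplitGraph S)ᶜ ⟨0, hn⟩ := by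
  have h := dotProduct_adjMatrix_mulVec_le_graphEig (completeSplitGraph S)ᶜ hn
    (fun v => if v ∈ S then 0 else 1)
  rw [dotProduct_adjMatrix_compl_completeSplitGraph_mulVec, dotProduct_self_ite_mem_zero_one,
    Fintype.card_fin, mul_comm] at h
  exact le_of_mul_le_mul_right h (sub_pos.2 (by exact_mod_cast hS))

theorem stmt17 (n : ℕ) (hn : 4 ≤ n) :
    ∃ G : SimpleGraph (Fin n),
      4 / 3 * (n : ℝ) - 2 < graphEig G ⟨0, by omega⟩ + graphEig Gᶜ ⟨0, by omega⟩ := by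
  obtain ⟨S, -, hS⟩ := exists_subset_card_eq (s := (univ : Finset (Fin n))) (n := n / 3)
    (by rw [card_univ, Fintype.card_fin]; omega)
  refine ⟨completeSplitGraph S, ?_⟩
  have hG := graphEig_completeSplitGraph_mul_ge (by omega) S
  have hGc := graphEig_compl_completeSplitGraph_ge (by omega) S (by omega)
  rw [hS] at hG hGc
  have hr1 : (1 : ℝ) ≤ (n / 3 : ℕ) := by exact_mod_cast (show 1 ≤ n / 3 by omega)
  have hrn : 3 * ((n / 3 : ℕ) : ℝ) ≤ n := by exact_mod_cast Nat.mul_div_le n 3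
  have hnr : (n : ℝ) < 3 * (n / 3 : ℕ) + 3 := by
    exact_mod_cast (show n < 3 * (n / 3) + 3 by omega)
  set r : ℝ := ((n / 3 : ℕ) : ℝ)
  have key : (n + 3 * r - 3) / 3 * (n + 3 * r) < 4 * r * (n - 1) := by
    nlinarith [mul_nonneg (sub_nonneg.2 hrn) (sub_nonneg.2 hnr.le)]
  have hGr := lt_of_mul_lt_mul_right (key.trans_le hG) (by positivity)
  linarith
end
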